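/- arXiv:1807.11412 — 2 statements merged into one kernel-verified Lean document; each statement's English description precedes it below -/
import Mathlib

section
/- Let p be a prime, n ≥ 2 and s ≥ 2 be integers, and let γ be an integer. Then there does not exist an almost p-ary sequence a of period n+s with s consecutive zero-symbols (a_0 = a_1 = ⋯ = a_{s-1} = 0 and a_i a power of ζ_p for s ≤ i ≤ n+s-1) such that C_a(t) = γ for all 1 ≤ t ≤ n+s-1; that is, no almost p-ary nearly perfect sequence of type γ with s ≥ 2 consecutive zero-symbols exists. -/
/-!
If the zero-symbols form a block of length `s ≥ 2`, then for `t ∈ {1, 2}` every product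
`a_i · conj(a_{i+t})` that meets the block vanishes, so `γ = C_a(1)` is a sum of `n - 1` and
`γ = C_a(2)` a sum of `n - 2` `p`-th roots of unity. Writing both as polynomials in a primitive
`p`-th root `ζ`, their difference is an integer polynomial vanishing at `ζ`, hence divisible by
the cyclotomic polynomial `Φ_p`; evaluating at `1` gives `p ∣ (n - 1) - (n - 2) = 1`.
-/

open Finset

/-- The autocorrelation function of a sequence `a` of period `N`:
`C_a(t) = ∑_{i=0}^{N-1} a_i · conj(a_{i+t})`. -/
noncomputable def autocorr (N : ℕ) (a : ℤ → ℂ) (t : ℤ) : ℂ :=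
  ∑ i ∈ Finset.range N, a (i : ℤ) * (starRingEnd ℂ) (a ((i : ℤ) + t))

open Polynomial

theorem IsPrimitiveRoot.cyclotomic_dvd_of_aeval_eq_zero {K : Type*} [Field K] [CharZero K]
    {ζ : K} {k : ℕ} (hζ : IsPrimitiveRoot ζ k) (hk : 0 < k) {P : ℤ[X]} (hP : aeval ζ P = 0) :
    cyclotomic k ℤ ∣ P := by
  rw [cyclotomic_eq_minpoly hζ hk]
  exact minpoly.isIntegrallyClosed_dvd (hζ.isIntegral hk) hP

theorem IsPrimitiveRoot.prime_dvd_eval_one_of_aeval_eq_zero {K : Type*} [Field K] [CharZero K]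
    {ζ : K} {p : ℕ} (hp : p.Prime) (hζ : IsPrimitiveRoot ζ p) {P : ℤ[X]} (hP : aeval ζ P = 0) :
    (p : ℤ) ∣ P.eval 1 := by
  have : Fact p.Prime := ⟨hp⟩
  rw [← eval_one_cyclotomic_prime (R := ℤ) (p := p)]
  exact eval_dvd (hζ.cyclotomic_dvd_of_aeval_eq_zero hp.pos hP)

theorem IsPrimitiveRoot.prime_dvd_card_sub_card_of_sum_eq {K ι κ : Type*} [Field K] [CharZero K]
    {ζ : K} {p : ℕ} (hp : p.Prime) (hζ : IsPrimitiveRoot ζ p) {S : Finset ι} {T : Finset κ}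
    {x : ι → K} {y : κ → K} (hx : ∀ i ∈ S, x i ^ p = 1) (hy : ∀ j ∈ T, y j ^ p = 1)
    (hxy : ∑ i ∈ S, x i = ∑ j ∈ T, y j) :
    (p : ℤ) ∣ (#S : ℤ) - #T := by
  have : NeZero p := ⟨hp.ne_zero⟩
  have hexp : ∀ z : K, z ^ p = 1 → ∃ e : ℕ, ζ ^ e = z := fun z hz =>
    (hζ.eq_pow_of_pow_eq_one hz).imp fun _ he => he.2
  choose! e he using hexp
  let P : ℤ[X] := ∑ i ∈ S, X ^ e (x i) - ∑ j ∈ T, X ^ e (y j)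
  have hP : aeval ζ P = 0 := by
    simp only [P, map_sub, map_sum, map_pow, aeval_X]
    rw [sum_congr rfl fun i hi => he _ (hx i hi), sum_congr rfl fun j hj => he _ (hy j hj), hxy,
      sub_self]
  have hP1 : P.eval 1 = #S - #T := by simp [P, eval_finsetSum]
  simpa [hP1] using hζ.prime_dvd_eval_one_of_aeval_eq_zero hp hP

theorem autocorr_eq_sum_of_zero_block {a : ℤ → ℂ} {n s t : ℕ}
    (hper : ∀ i : ℤ, a (i + (n + s : ℕ)) = a i) (hzero : ∀ i : ℕ, i < s → a i = 0)
    (hts : t ≤ s) (htn : t ≤ n) :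
    autocorr (n + s) a t =
      ∑ j ∈ range (n - t), a (s + j : ℕ) * starRingEnd ℂ (a (s + j + t : ℕ)) := by
  have hsplit : n + s = s + (n - t) + t := by omega
  have hhead : ∑ i ∈ range s, a i * starRingEnd ℂ (a (i + t)) = 0 :=
    sum_eq_zero fun i hi => by rw [hzero i (mem_range.1 hi), zero_mul]
  have htail : ∑ j ∈ range t,
      a (s + (n - t) + j : ℕ) * starRingEnd ℂ (a ((s + (n - t) + j : ℕ) + t)) = 0 := by
    refine sum_eq_zero fun j hj => ?_
    have hwrap : ((s + (n - t) + j : ℕ) : ℤ) + t = j + (n + s : ℕ) := by push_cast; omega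
    rw [hwrap, hper, hzero j (by linarith [mem_range.1 hj]), map_zero, mul_zero]
  rw [autocorr, hsplit, sum_range_add, sum_range_add, hhead, htail, zero_add, add_zero]
  push_cast
  rfl

theorem stmt5 (p n s : ℕ) (hp : p.Prime) (hn : 2 ≤ n) (hs : 2 ≤ s)
    (ζ : ℂ) (hζ : IsPrimitiveRoot ζ p) (γ : ℤ) :
    ¬ ∃ a : ℤ → ℂ,
      (∀ i : ℤ, a (i + (n + s : ℕ)) = a i) ∧
      (∀ i : ℕ, i < s → a (i : ℤ) = 0) ∧
      (∀ i : ℕ, s ≤ i → i < n + s → ∃ b : ℕ, a (i : ℤ) = ζ ^ b) ∧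
      (∀ t : ℕ, 1 ≤ t → t ≤ n + s - 1 → autocorr (n + s) a (t : ℤ) = (γ : ℂ)) := by
  rintro ⟨a, hper, hzero, hroot, hC⟩
  have hterm : ∀ t ≤ n, ∀ j ∈ range (n - t),
      (a (s + j : ℕ) * starRingEnd ℂ (a (s + j + t : ℕ))) ^ p = 1 := by
    have hpow : ∀ i : ℕ, s ≤ i → i < n + s → a i ^ p = 1 := fun i hsi hin => by
      obtain ⟨b, hb⟩ := hroot i hsi hin
      rw [hb, ← pow_mul, mul_comm, pow_mul, hζ.pow_eq_one, one_pow]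
    intro t ht j hj
    have hj := mem_range.1 hj
    rw [mul_pow, ← map_pow, hpow _ (by omega) (by omega), hpow _ (by omega) (by omega), map_one,
      one_mul]
  have hsum : ∀ t, 1 ≤ t → t ≤ 2 → (γ : ℂ) =
      ∑ j ∈ range (n - t), a (s + j : ℕ) * starRingEnd ℂ (a (s + j + t : ℕ)) := fun t h1 h2 => by
    rw [← hC t h1 (by omega), autocorr_eq_sum_of_zero_block hper hzero (by omega) (by omega)]
  have hdvd := hζ.prime_dvd_card_sub_card_of_sum_eq hp (hterm 1 (by omega)) (hterm 2 hn)
    ((hsum 1 le_rfl one_le_two).symm.trans (hsum 2 one_le_two le_rfl))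
  rw [card_range, card_range, show ((n - 1 : ℕ) : ℤ) - (n - 2 : ℕ) = 1 by omega] at hdvd
  exact hp.ne_one (Nat.dvd_one.1 (Int.natCast_dvd_natCast.1 hdvd))
end

section
/- Let p be a prime, n ≥ 2 an integer, and γ1, γ2 integers. If there exists an almost p-ary nearly perfect sequence of type (γ1, γ2) and period n+2 with two consecutive zero-symbols, then p divides n - γ2 - 2 and p divides n - γ1 - 1, and moreover -(n-γ2-2)/p ≤ γ2 ≤ n - 2 and -(n-γ1-1)/p ≤ γ1 ≤ n - 1. -/
/-!
Write every product `a_i · conj(a_{i+t})` with `2 ≤ i` and `i + t ≤ n + 1` as `ζ^{e_i}`; for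
`t ∈ {1, 2}` every other product vanishes, so `C_a(t)` is a sum of `n - t` powers of `ζ`.
If `m_j` counts the exponents `e_i ≡ j`, then `∑ m_j ζ^j = γ`, i.e. `∑ (m_j - [j = 0] γ) ζ^j = 0`.
Since `1, ζ, …, ζ^{p-2}` are linearly independent over `ℚ` and `∑_{j<p} ζ^j = 0`, all the
`m_j - [j = 0] γ` equal a common `d ≥ 0`; hence `n - t - γ = p d` and `m_0 = γ + d ≥ 0`.
-/

open Finset

open ComplexConjugate

namespace IsPrimitiveRoot

variable {K : Type*} [Field K] [CharZero K] {p : ℕ} {ζ : K}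

lemma eq_of_sum_intCast_mul_pow_eq_zero (hp : p.Prime) (hζ : IsPrimitiveRoot ζ p) {c : ℕ → ℤ}
    (h : ∑ j ∈ range p, (c j : K) * ζ ^ j = 0) {j : ℕ} (hj : j < p) : c j = c (p - 1) := by
  obtain ⟨m, rfl⟩ := Nat.exists_eq_add_one_of_ne_zero hp.ne_zero
  rw [Nat.add_sub_cancel]
  obtain rfl | hj := (Nat.lt_succ_iff.mp hj).eq_or_lt
  · rfl
  have hind := linearIndependent_pow (K := ℚ) ζ
  rw [← Polynomial.cyclotomic_eq_minpoly_rat hζ hp.pos, Polynomial.natDegree_cyclotomic,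
    Nat.totient_prime hp, Nat.add_sub_cancel] at hind
  have hdiff : ∑ i : Fin m, ((c i - c m : ℤ) : ℚ) • ζ ^ (i : ℕ) = 0 := calc
    _ = ∑ i ∈ range m, ((c i : K) - c m) * ζ ^ i := by
      rw [Fin.sum_univ_eq_sum_range (fun i => ((c i - c m : ℤ) : ℚ) • ζ ^ i)]
      simp [Rat.smul_def]
    _ = ∑ i ∈ range (m + 1), (c i : K) * ζ ^ i - c m * ∑ i ∈ range (m + 1), ζ ^ i := by
      rw [mul_sum, ← sum_sub_distrib, sum_range_succ, sub_self, add_zero]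
      exact sum_congr rfl fun i _ => sub_mul ..
    _ = 0 := by rw [h, hζ.geom_sum_eq_zero hp.one_lt, mul_zero, sub_zero]
  have := Fintype.linearIndependent_iff.mp hind _ hdiff ⟨j, hj⟩
  exact sub_eq_zero.mp (by exact_mod_cast this)

lemma dvd_card_sub_of_sum_eq_intCast (hp : p.Prime) (hζ : IsPrimitiveRoot ζ p) {ι : Type*}
    {s : Finset ι} {x : ι → K} (hx : ∀ i ∈ s, x i ^ p = 1) {γ : ℤ} (h : ∑ i ∈ s, x i = γ) :
    (p : ℤ) ∣ #s - γ ∧ -((#s - γ) / p) ≤ γ ∧ γ ≤ #s := by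
  have : NeZero p := ⟨hp.ne_zero⟩
  choose! e he hxe using fun i hi => hζ.eq_pow_of_pow_eq_one (hx i hi)
  have hmaps : ∀ i ∈ s, e i ∈ range p := fun i hi => mem_range.mpr (he i hi)
  set m : ℕ → ℕ := fun j => #{i ∈ s | e i = j}
  have hcard : ∑ j ∈ range p, (m j : ℤ) = #s := by
    exact_mod_cast (card_eq_sum_card_fiberwise hmaps).symm
  have hsum : ∑ j ∈ range p, (m j : K) * ζ ^ j = γ := by
    rw [← h, ← sum_fiberwise_of_maps_to hmaps]
    refine sum_congr rfl fun j _ => ?_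
    rw [← nsmul_eq_mul, ← sum_const]
    refine sum_congr rfl fun i hi => ?_
    rw [← hxe i (mem_filter.mp hi).1, (mem_filter.mp hi).2]
  set c : ℕ → ℤ := fun j => m j - if j = 0 then γ else 0
  have hc_sum : ∑ j ∈ range p, (c j : K) * ζ ^ j = 0 := by
    simp [c, sub_mul, sum_sub_distrib, hsum, ite_mul, hp.pos]
  have hconst := fun j (hj : j < p) => eq_of_sum_intCast_mul_pow_eq_zero hp hζ hc_sum hj
  have hc_top : c (p - 1) = m (p - 1) := by simp [c, Nat.sub_eq_zero_iff_le, hp.one_lt.not_ge]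
  have hcard' : (#s : ℤ) - γ = p * m (p - 1) := calc
    _ = ∑ j ∈ range p, c j := by simp [c, sum_sub_distrib, hcard, hp.pos]
    _ = ∑ j ∈ range p, c (p - 1) := sum_congr rfl fun j hj => hconst j (mem_range.mp hj)
    _ = p * m (p - 1) := by simp [hc_top]
  have hm0 : (m 0 : ℤ) - γ = m (p - 1) := by simpa [c, hc_top] using hconst 0 hp.pos
  refine ⟨⟨_, hcard'⟩, ?_, ?_⟩
  · rw [hcard', Int.mul_ediv_cancel_left _ (by exact_mod_cast hp.ne_zero)]
    omega
  · have : (0 : ℤ) ≤ p * m (p - 1) := by positivity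
    linarith

end IsPrimitiveRoot

lemma autocorr_eq_sum_Ico {n t : ℕ} {a : ℤ → ℂ} (hper : ∀ i : ℤ, a (i + (n + 2 : ℕ)) = a i)
    (h0 : a 0 = 0) (h1 : a 1 = 0) (ht : t ≤ 2) :
    autocorr (n + 2) a t = ∑ i ∈ Ico 2 (n + 2 - t), a i * conj (a (i + t)) := by
  refine (sum_subset (fun i hi => mem_range.mpr (by grind)) fun i hi hi' => ?_).symm
  rw [mem_range] at hi
  rw [mem_Ico, not_and_or, not_le, not_lt] at hi'
  rcases hi' with hi' | hi'
  · interval_cases i <;> simp [h0, h1]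
  · obtain ⟨k, hk, hik⟩ : ∃ k : ℕ, k < 2 ∧ (i : ℤ) + t = k + (n + 2 : ℕ) :=
      ⟨i + t - (n + 2), by omega, by push_cast; omega⟩
    rw [hik, hper]
    interval_cases k <;> simp [h0, h1]

lemma dvd_sub_of_autocorr_eq {p n t : ℕ} {ζ : ℂ} (hp : p.Prime) (hζ : IsPrimitiveRoot ζ p)
    {a : ℤ → ℂ} (hper : ∀ i : ℤ, a (i + (n + 2 : ℕ)) = a i) (h0 : a 0 = 0) (h1 : a 1 = 0)
    (hroot : ∀ i : ℕ, 2 ≤ i → i ≤ n + 1 → a i ^ p = 1) (ht : t ≤ 2) (htn : t ≤ n) {γ : ℤ}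
    (h : autocorr (n + 2) a t = γ) :
    (p : ℤ) ∣ n - γ - t ∧ -((n - γ - t) / p) ≤ γ ∧ γ ≤ n - t := by
  rw [autocorr_eq_sum_Ico hper h0 h1 ht] at h
  have hcard : (#(Ico 2 (n + 2 - t)) : ℤ) = n - t := by simp only [Nat.card_Ico]; omega
  have hx : ∀ i ∈ Ico 2 (n + 2 - t), (a i * conj (a (i + t))) ^ p = 1 := by
    intro i hi
    rw [mem_Ico] at hi
    have hit := hroot (i + t) (by omega) (by omega)
    push_cast at hit
    rw [mul_pow, ← map_pow, hroot i hi.1 (by omega), hit, map_one, one_mul]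
  rw [sub_right_comm, ← hcard]
  exact hζ.dvd_card_sub_of_sum_eq_intCast hp hx h

theorem stmt8 (p n : ℕ) (hp : p.Prime) (hn : 2 ≤ n) (γ1 γ2 : ℤ)
    (ζ : ℂ) (hζ : IsPrimitiveRoot ζ p)
    (h : ∃ a : ℤ → ℂ,
      (∀ i : ℤ, a (i + (n + 2 : ℕ)) = a i) ∧
      a 0 = 0 ∧ a 1 = 0 ∧
      (∀ i : ℕ, 2 ≤ i → i ≤ n + 1 → ∃ b : ℕ, a (i : ℤ) = ζ ^ b) ∧
      autocorr (n + 2) a 1 = (γ1 : ℂ) ∧ autocorr (n + 2) a ((n : ℤ) + 1) = (γ1 : ℂ) ∧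
      (∀ t : ℕ, 2 ≤ t → t ≤ n → autocorr (n + 2) a (t : ℤ) = (γ2 : ℂ))) :
    (p : ℤ) ∣ (n : ℤ) - γ2 - 2 ∧ (p : ℤ) ∣ (n : ℤ) - γ1 - 1 ∧
    -(((n : ℤ) - γ2 - 2) / p) ≤ γ2 ∧ γ2 ≤ (n : ℤ) - 2 ∧
    -(((n : ℤ) - γ1 - 1) / p) ≤ γ1 ∧ γ1 ≤ (n : ℤ) - 1 := by
  obtain ⟨a, hper, h0, h1, hpow, hC1, -, hC⟩ := h
  have hroot : ∀ i : ℕ, 2 ≤ i → i ≤ n + 1 → a i ^ p = 1 := fun i hi hi' => by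
    obtain ⟨b, hb⟩ := hpow i hi hi'
    rw [hb, pow_right_comm, hζ.pow_eq_one, one_pow]
  have hγ2 := dvd_sub_of_autocorr_eq hp hζ hper h0 h1 hroot le_rfl hn (hC 2 le_rfl hn)
  have hγ1 := dvd_sub_of_autocorr_eq (t := 1) hp hζ hper h0 h1 hroot (by norm_num) (by omega)
    (by exact_mod_cast hC1)
  push_cast at hγ1 hγ2
  exact ⟨hγ2.1, hγ1.1, hγ2.2.1, hγ2.2.2, hγ1.2.1, hγ1.2.2⟩
end
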